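/- Let K be a differential ring with derivation D, let a_0 = 1, a_1, ..., a_n ∈ K, and let u ∈ K be arbitrary. Define I_k := Σ_{j=0}^{k} C(k,j) * a_{k−j} * Q_j(−a_1) with Q_j the covariant Bell polynomials relative to a_1, and define a_k^{⋆u} := Σ_{m=0}^{k} C(k,m) * I_m * P_{k−m}(a_1 − u); note that a_1^{⋆u} = a_1 − u. Then the u-star action fixes all gauge–Wilczynski covariants: for every 0 ≤ k ≤ n, Σ_{j=0}^{k} C(k,j) * a_{k−j}^{⋆u} * Q'_j(−(a_1 − u)) = I_k, where Q'_j are the covariant Bell polynomials relative to a_1 − u. -/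

import Mathlib

/-- Noncommutative Bell polynomials: `P 0 = 1`, `P (m+1) = D (P m) + u * P m`. -/
def bellP {K : Type*} [Ring K] (D : K → K) (u : K) : ℕ → K
  | 0 => 1
  | m + 1 => D (bellP D u m) + u * bellP D u m

/-- Covariant Bell polynomials relative to `c`:
`Q 0 = 1`, `Q (m+1) = Δ_c (Q m) + u * Q m` where `Δ_c b = D b + c*b - b*c`. -/
def qBell {K : Type*} [Ring K] (D : K → K) (c u : K) : ℕ → K
  | 0 => 1
  | m + 1 =>
      (D (qBell D c u m) + c * qBell D c u m - qBell D c u m * c)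
        + u * qBell D c u m

/-!
Write `f ⋆ g` for the binomial convolution `(f ⋆ g) n = ∑_{i+j=n} C(n,i) f_i g_j`, which is
associative with unit `δ₀`. With `c = a₁ - u`, the hypothesis says `a⋆ = I ⋆ P_c` and the claim
is `a⋆ ⋆ Q = I` for `Q = Q_c(-c)`, so it suffices that `P_c ⋆ Q = δ₀`. Since
`P_{i+1} = D P_i + c P_i` and `Q_{j+1} = D Q_j - Q_j c`, the twisted derivation
`Δ_c b = D b + c b - b c` satisfies `Δ_c (P_i Q_j) = P_{i+1} Q_j + P_i Q_{j+1}`, and Pascal's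
rule turns this into `(P_c ⋆ Q) r = Δ_c^r 1`, which vanishes for `r > 0` because `Δ_c 1 = 0`.
-/

open Finset

section BinomConv

variable {R : Type*} [Semiring R]

/-- The coefficients of the product of exponential generating functions, without dividing by
factorials. -/
def binomConv (f g : ℕ → R) (n : ℕ) : R :=
  ∑ p ∈ antidiagonal n, n.choose p.1 • (f p.1 * g p.2)

theorem binomConv_eq_sum_range (f g : ℕ → R) (n : ℕ) :
    binomConv f g n = ∑ m ∈ range (n + 1), (n.choose m : R) * f m * g (n - m) := by
  simp only [binomConv, Nat.sum_antidiagonal_eq_sum_range_succ_mk, nsmul_eq_mul, mul_assoc]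

theorem binomConv_eq_sum_range_rev (f g : ℕ → R) (n : ℕ) :
    binomConv f g n = ∑ j ∈ range (n + 1), (n.choose j : R) * f (n - j) * g j := by
  rw [binomConv, ← Nat.sum_antidiagonal_swap]
  simp only [Prod.fst_swap, Prod.snd_swap]
  rw [Nat.sum_antidiagonal_eq_sum_range_succ (fun j i => n.choose i • (f i * g j))]
  refine sum_congr rfl fun j hj => ?_
  rw [Nat.choose_symm (Nat.lt_succ_iff.mp (mem_range.mp hj)), nsmul_eq_mul, mul_assoc]

theorem binomConv_single_zero_one (f : ℕ → R) : binomConv f (Pi.single 0 1) = f := by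
  funext n
  rw [binomConv, sum_eq_single_of_mem (n, 0) (by simp)]
  · simp
  · rintro ⟨i, j⟩ hij hne
    have hj : j ≠ 0 := by
      rintro rfl
      simp_all
    simp [hj]

theorem binomConv_assoc (f g h : ℕ → R) :
    binomConv (binomConv f g) h = binomConv f (binomConv g h) := by
  funext n
  simp only [binomConv, smul_sum, sum_mul, mul_sum, sum_sigma']
  refine sum_nbij' (fun ⟨⟨_, l⟩, ⟨i, j⟩⟩ ↦ ⟨(i, j + l), (j, l)⟩)
    (fun ⟨⟨i, _⟩, ⟨j, l⟩⟩ ↦ ⟨(i + j, l), (i, j)⟩) (by aesop (add simp add_assoc))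
    (by aesop (add simp add_assoc)) (by aesop) (by aesop) ?_
  rintro ⟨⟨p, l⟩, ⟨i, j⟩⟩ hx
  obtain ⟨rfl, rfl⟩ : i + j + l = n ∧ i + j = p := by
    simp only [mem_sigma, HasAntidiagonal.mem_antidiagonal] at hx
    omega
  have hchoose : (i + j + l).choose (i + j) * (i + j).choose i
      = (i + j + l).choose i * (j + l).choose j := by
    simpa [add_assoc] using Nat.choose_mul (n := i + j + l) (Nat.le_add_right i j)
  simp only [smul_mul_assoc, mul_smul_comm, smul_smul, hchoose, mul_assoc]

theorem binomConv_succ_of_leibniz (L : R →+ R) (A B : ℕ → R)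
    (hL : ∀ i j, L (A i * B j) = A (i + 1) * B j + A i * B (j + 1)) (n : ℕ) :
    binomConv A B (n + 1) = L (binomConv A B n) := by
  rw [binomConv, sum_antidiagonal_choose_succ_nsmul (fun i j => A i * B j), binomConv,
    map_sum, add_comm, ← sum_add_distrib]
  refine sum_congr rfl fun p hp => ?_
  rw [map_nsmul, hL, smul_add, ← (mem_antidiagonal.mp hp), Nat.choose_symm_add]

theorem binomConv_eq_iterate_of_leibniz (L : R →+ R) (A B : ℕ → R)
    (hL : ∀ i j, L (A i * B j) = A (i + 1) * B j + A i * B (j + 1)) (n : ℕ) :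
    binomConv A B n = L^[n] (A 0 * B 0) := by
  induction n with
  | zero => simp [binomConv]
  | succ n ih => rw [binomConv_succ_of_leibniz L A B hL, ih, Function.iterate_succ_apply']

end BinomConv

section Bell

variable {K : Type*} [Ring K] (D : K → K)

theorem bellP_mul_qBell_leibniz (hmul : ∀ a b : K, D (a * b) = D a * b + a * D b) (c : K)
    (i j : ℕ) :
    D (bellP D c i * qBell D c (-c) j) + c * (bellP D c i * qBell D c (-c) j)
        - bellP D c i * qBell D c (-c) j * c
      = bellP D c (i + 1) * qBell D c (-c) j + bellP D c i * qBell D c (-c) (j + 1) := by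
  rw [hmul, bellP, qBell]
  noncomm_ring

theorem binomConv_bellP_qBell (hadd : ∀ a b : K, D (a + b) = D a + D b)
    (hmul : ∀ a b : K, D (a * b) = D a * b + a * D b) (c : K) :
    binomConv (bellP D c) (qBell D c (-c)) = Pi.single 0 1 := by
  let Δ : K →+ K := AddMonoidHom.mk' (fun b => D b + c * b - b * c) fun a b => by
    simp only [hadd]
    noncomm_ring
  have hΔ_one : Δ 1 = 0 := by
    have hD_one : D 1 = 0 := by simpa using hmul 1 1
    simp [Δ, hD_one]
  funext r
  rw [binomConv_eq_iterate_of_leibniz Δ _ _ (bellP_mul_qBell_leibniz D hmul c)]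
  cases r with
  | zero => simp [bellP, qBell]
  | succ r =>
    rw [Function.iterate_succ_apply, bellP, qBell, mul_one, hΔ_one, iterate_map_zero]
    simp

end Bell

theorem star_action_fixes_Ik_general {K : Type*} [Ring K] (D : K → K)
    (hadd : ∀ a b : K, D (a + b) = D a + D b)
    (hmul : ∀ a b : K, D (a * b) = D a * b + a * D b)
    (n : ℕ) (a : ℕ → K) (u : K)
    (I : ℕ → K)
    (astar : ℕ → K)
    (hastar : ∀ k, astar k = ∑ m ∈ Finset.range (k + 1),
      (k.choose m : K) * I m * bellP D (a 1 - u) (k - m)) :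
    ∀ k ≤ n,
      ∑ j ∈ Finset.range (k + 1),
          (k.choose j : K) * astar (k - j) * qBell D (a 1 - u) (-(a 1 - u)) j
        = I k := by
  intro k _
  have hastar_conv : astar = binomConv I (bellP D (a 1 - u)) :=
    funext fun m => by rw [hastar, binomConv_eq_sum_range]
  rw [← binomConv_eq_sum_range_rev, hastar_conv, binomConv_assoc,
    binomConv_bellP_qBell D hadd hmul, binomConv_single_zero_one]

/-- the `u⋆`-action fixes all gauge–Wilczynski covariants `I_k`. -/
theorem star_action_fixes_Ik {K : Type*} [Ring K] (D : K → K)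
    (hadd : ∀ a b : K, D (a + b) = D a + D b)
    (hmul : ∀ a b : K, D (a * b) = D a * b + a * D b)
    (n : ℕ) (a : ℕ → K) (ha0 : a 0 = 1) (u : K)
    (I : ℕ → K)
    (hI : ∀ k, I k = ∑ j ∈ Finset.range (k + 1),
      (k.choose j : K) * a (k - j) * qBell D (a 1) (-(a 1)) j)
    (astar : ℕ → K)
    (hastar : ∀ k, astar k = ∑ m ∈ Finset.range (k + 1),
      (k.choose m : K) * I m * bellP D (a 1 - u) (k - m)) :
    ∀ k ≤ n,
      ∑ j ∈ Finset.range (k + 1),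
          (k.choose j : K) * astar (k - j) * qBell D (a 1 - u) (-(a 1 - u)) j
        = I k :=
  star_action_fixes_Ik_general D hadd hmul n a u I astar hastar
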